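/- The 7-dimensional indecomposable 2-step nilpotent Lie algebra 37B, with basis e₁,…,e₇ and structure equations de⁵ = e^{12}, de⁶ = e^{23}, de⁷ = e^{34} (all other de^i = 0), admits a purely coclosed G2-structure: there exists a basis f¹,…,f⁷ of its dual space such that the 4-form ∗φ = f^{1234}+f^{1256}+f^{1367}+f^{1457}+f^{2357}−f^{2467}+f^{3456} is d-closed and the 3-form φ = f^{127}+f^{347}+f^{567}+f^{135}−f^{146}−f^{236}−f^{245} satisfies φ ∧ dφ = 0. (Worked Example of the paper; the structure is built from ω = e^{13}+e^{24}−e^{67}, ψ₋ = e^{127}−e^{146}+e^{236}−e^{347}, ψ₊ = e^{126}+e^{147}−e^{346}−e^{237}, η = e⁵+e⁷, via φ = ω∧η+ψ₊.) -/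

import Mathlib

set_option synthInstance.maxHeartbeats 1000000
set_option maxHeartbeats 1000000

open ExteriorAlgebra Module

noncomputable section

/-- The degree-`k` homogeneous component of the exterior algebra of `V`. -/
def degPart (V : Type*) [AddCommGroup V] [Module ℝ V] (k : ℕ) :
    Submodule ℝ (ExteriorAlgebra ℝ V) :=
  LinearMap.range (ExteriorAlgebra.ι ℝ : V →ₗ[ℝ] ExteriorAlgebra ℝ V) ^ k

/-- `c` is the interior product (contraction) with the vector `X : V`, acting on the exterior
algebra `Λ V*` of the dual of `V`: it is an odd antiderivation which on a 1-form `α` gives the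
scalar `α(X)`. -/
def IsContraction {V : Type*} [AddCommGroup V] [Module ℝ V] (X : V)
    (c : ExteriorAlgebra ℝ (Dual ℝ V) →ₗ[ℝ] ExteriorAlgebra ℝ (Dual ℝ V)) : Prop :=
  (∀ k, ∀ x ∈ degPart (Dual ℝ V) k, ∀ y,
      c (x * y) = c x * y + ((-1 : ℝ)) ^ k • (x * c y)) ∧
  (∀ α : Dual ℝ V, c (ExteriorAlgebra.ι ℝ α) = algebraMap ℝ _ (α X))

variable {g : Type*} [LieRing g] [LieAlgebra ℝ g]

/-- `d` is the Chevalley–Eilenberg differential of `g` on `Λ g*`, expressed with respect to a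
basis `b` of `g`: it raises degree by one, is an odd derivation, and on 1-forms it is given by
`dα = -Σ_{i<j} α([b i, b j]) bⁱ ∧ bʲ` (which encodes `dα(x,y) = -α([x,y])`). -/
def IsCEDifferential {n : ℕ} (b : Basis (Fin n) ℝ g)
    (d : ExteriorAlgebra ℝ (Dual ℝ g) →ₗ[ℝ] ExteriorAlgebra ℝ (Dual ℝ g)) : Prop :=
  (∀ k, ∀ x ∈ degPart (Dual ℝ g) k, d x ∈ degPart (Dual ℝ g) (k + 1)) ∧
  (∀ k, ∀ x ∈ degPart (Dual ℝ g) k, ∀ y,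
      d (x * y) = d x * y + ((-1 : ℝ)) ^ k • (x * d y)) ∧
  (∀ α : Dual ℝ g, d (ExteriorAlgebra.ι ℝ α) =
    (-(2⁻¹ : ℝ)) • ∑ i, ∑ j, α ⁅b i, b j⁆ •
      (ExteriorAlgebra.ι ℝ (b.dualBasis i) * ExteriorAlgebra.ι ℝ (b.dualBasis j)))

/-- The 4-form `∗φ = e^{1234}+e^{1256}+e^{1367}+e^{1457}+e^{2357}-e^{2467}+e^{3456}` built out
of a family `f` of seven 1-forms (indexed from 0). -/
def starPhiForm {W : Type*} [AddCommGroup W] [Module ℝ W] (f : Fin 7 → W) :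
    ExteriorAlgebra ℝ W :=
  let e : Fin 7 → ExteriorAlgebra ℝ W := fun i => ExteriorAlgebra.ι ℝ (f i)
  e 0 * e 1 * e 2 * e 3 + e 0 * e 1 * e 4 * e 5 + e 0 * e 2 * e 5 * e 6 +
    e 0 * e 3 * e 4 * e 6 + e 1 * e 2 * e 4 * e 6 - e 1 * e 3 * e 5 * e 6 +
    e 2 * e 3 * e 4 * e 5

/-- The 3-form `φ = e^{127}+e^{347}+e^{567}+e^{135}-e^{146}-e^{236}-e^{245}` built out of a
family `f` of seven 1-forms (indexed from 0). -/
def phiG2Form {W : Type*} [AddCommGroup W] [Module ℝ W] (f : Fin 7 → W) :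
    ExteriorAlgebra ℝ W :=
  let e : Fin 7 → ExteriorAlgebra ℝ W := fun i => ExteriorAlgebra.ι ℝ (f i)
  e 0 * e 1 * e 6 + e 2 * e 3 * e 6 + e 4 * e 5 * e 6 + e 0 * e 2 * e 4 -
    e 0 * e 3 * e 5 - e 1 * e 2 * e 5 - e 1 * e 3 * e 4

/-- A 7-dimensional real Lie algebra admits a coclosed G₂-structure if there is a basis
`f¹,…,f⁷` of `g*` for which the 4-form `∗φ` is closed for the Chevalley–Eilenberg
differential. -/
def AdmitsCoclosedG2 (g : Type*) [LieRing g] [LieAlgebra ℝ g] : Prop :=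
  ∃ (b : Basis (Fin 7) ℝ g)
    (d : ExteriorAlgebra ℝ (Dual ℝ g) →ₗ[ℝ] ExteriorAlgebra ℝ (Dual ℝ g)),
    IsCEDifferential b d ∧
    ∃ f : Basis (Fin 7) ℝ (Dual ℝ g), d (starPhiForm fun i => f i) = 0

/-- A 7-dimensional real Lie algebra admits a purely coclosed G₂-structure if there is a basis
`f¹,…,f⁷` of `g*` for which `∗φ` is closed and moreover `φ ∧ dφ = 0`. -/
def AdmitsPurelyCoclosedG2 (g : Type*) [LieRing g] [LieAlgebra ℝ g] : Prop :=
  ∃ (b : Basis (Fin 7) ℝ g)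
    (d : ExteriorAlgebra ℝ (Dual ℝ g) →ₗ[ℝ] ExteriorAlgebra ℝ (Dual ℝ g)),
    IsCEDifferential b d ∧
    ∃ f : Basis (Fin 7) ℝ (Dual ℝ g),
      d (starPhiForm fun i => f i) = 0 ∧
      (phiG2Form fun i => f i) * d (phiG2Form fun i => f i) = 0

/-- A Lie algebra is decomposable if it is the direct sum of two nonzero ideals. -/
def Decomposable (g : Type*) [LieRing g] [LieAlgebra ℝ g] : Prop :=
  ∃ I J : LieIdeal ℝ g, I ≠ ⊥ ∧ J ≠ ⊥ ∧ I ⊓ J = ⊥ ∧ I ⊔ J = ⊤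

/-- Shorthand for the 1-form `eⁱ` (the `i`-th dual basis vector) in `Λ g*`. -/
def ef {g : Type*} [LieRing g] [LieAlgebra ℝ g] (b : Basis (Fin 7) ℝ g) (i : Fin 7) :
    ExteriorAlgebra ℝ (Dual ℝ g) :=
  ExteriorAlgebra.ι ℝ (b.dualBasis i)

/-!
In the coframe `f = (e¹, e³, e², e⁴, e⁶, -e⁷, e⁵ + e⁷)` (1-based indices; the `Fin 7`
indices are one less) the structure equations of `37B` read `df¹ = ⋯ = df⁴ = 0`, `df⁵ = -f^{23}`,
`df⁶ = -f^{24}`, `df⁷ = f^{13} + f^{24}`. Since `f⁷ = η` and `f^{12} + f^{34} + f^{56} = ω`, the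
form `φ` built from `f` is `ω ∧ η + ψ₊`. Both `d(∗φ) = 0` and `φ ∧ dφ = 0` then follow from
these structure equations alone, by expanding with the Leibniz rule and sorting monomials.
-/

namespace ExteriorAlgebra

variable {R W : Type*} [CommRing R] [AddCommGroup W] [Module R W]

theorem ι_mul_ι_mul_self (w : W) (x : ExteriorAlgebra R W) : ι R w * (ι R w * x) = 0 := by
  rw [← mul_assoc, ι_sq_zero, zero_mul]

theorem ι_mul_ι_anticomm (v w : W) : ι R v * ι R w = -(ι R w * ι R v) :=
  eq_neg_of_add_eq_zero_left (ι_add_mul_swap v w)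

/- The hypothesis `j < i` orients the rewrites below, so that `simp` sorts every monomial in a
family `f` into increasing order instead of looping. -/
theorem ι_mul_ι_swap_of_lt {κ : Type*} [LT κ] (f : κ → W) {i j : κ} (_ : j < i) :
    ι R (f i) * ι R (f j) = -(ι R (f j) * ι R (f i)) :=
  ι_mul_ι_anticomm _ _

theorem ι_mul_ι_mul_swap_of_lt {κ : Type*} [LT κ] (f : κ → W) {i j : κ} (h : j < i)
    (x : ExteriorAlgebra R W) :
    ι R (f i) * (ι R (f j) * x) = -(ι R (f j) * (ι R (f i) * x)) := by
  rw [← mul_assoc, ι_mul_ι_swap_of_lt f h, neg_mul, mul_assoc]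

end ExteriorAlgebra

structure IsCoframe37B {W : Type*} [AddCommGroup W] [Module ℝ W]
    (d : ExteriorAlgebra ℝ W →ₗ[ℝ] ExteriorAlgebra ℝ W) (f : Fin 7 → W) : Prop where
  map_ι_mul : ∀ w y, d (ι ℝ w * y) = d (ι ℝ w) * y - ι ℝ w * d y
  d_ι_of_le_three : ∀ i : Fin 7, i ≤ 3 → d (ι ℝ (f i)) = 0
  d_ι_four : d (ι ℝ (f 4)) = -(ι ℝ (f 1) * ι ℝ (f 2))
  d_ι_five : d (ι ℝ (f 5)) = -(ι ℝ (f 1) * ι ℝ (f 3))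
  d_ι_six : d (ι ℝ (f 6)) = ι ℝ (f 0) * ι ℝ (f 2) + ι ℝ (f 1) * ι ℝ (f 3)

namespace IsCoframe37B

variable {W : Type*} [AddCommGroup W] [Module ℝ W]
  {d : ExteriorAlgebra ℝ W →ₗ[ℝ] ExteriorAlgebra ℝ W} {f : Fin 7 → W}

theorem d_starPhiForm (hf : IsCoframe37B d f) : d (starPhiForm f) = 0 := by
  have := hf.d_ι_of_le_three
  simp +decide only [starPhiForm, mul_add, mul_neg, neg_mul, mul_sub,
    mul_assoc, map_add, map_sub, hf.map_ι_mul, this 0 (by decide),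
    this 1 (by decide), this 2 (by decide), this 3 (by decide), hf.d_ι_four, hf.d_ι_five,
    hf.d_ι_six, zero_mul, mul_zero, zero_sub, sub_zero, add_zero, zero_add, neg_zero, neg_neg,
    ι_mul_ι_mul_self, ι_mul_ι_mul_swap_of_lt f, ι_mul_ι_swap_of_lt f]
  abel

theorem phiG2Form_mul_d_phiG2Form (hf : IsCoframe37B d f) :
    phiG2Form f * d (phiG2Form f) = 0 := by
  have := hf.d_ι_of_le_three
  simp +decide only [phiG2Form, mul_add, add_mul, mul_neg, neg_mul,
    mul_sub, sub_mul, mul_assoc, map_add, map_sub, hf.map_ι_mul, this 0 (by decide),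
    this 1 (by decide), this 2 (by decide), this 3 (by decide), hf.d_ι_four, hf.d_ι_five,
    hf.d_ι_six, zero_mul, mul_zero, zero_sub, sub_zero, add_zero, zero_add, neg_zero, neg_neg,
    ι_sq_zero, ι_mul_ι_mul_self, ι_mul_ι_mul_swap_of_lt f, ι_mul_ι_swap_of_lt f]

end IsCoframe37B

theorem IsCEDifferential.map_ι_mul {n : ℕ} {b : Basis (Fin n) ℝ g}
    {d : ExteriorAlgebra ℝ (Dual ℝ g) →ₗ[ℝ] ExteriorAlgebra ℝ (Dual ℝ g)}
    (hd : IsCEDifferential b d) (α : Dual ℝ g) (y : ExteriorAlgebra ℝ (Dual ℝ g)) :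
    d (ι ℝ α * y) = d (ι ℝ α) * y - ι ℝ α * d y := by
  have hα : ι ℝ α ∈ degPart (Dual ℝ g) 1 := by
    rw [degPart, pow_one]
    exact LinearMap.mem_range_self _ α
  rw [hd.2.1 1 _ hα y, pow_one, neg_one_smul, sub_eq_add_neg]

namespace Module.Basis

variable {R V : Type*} [CommRing R] [AddCommGroup V] [Module R V]

def coframe37B (B : Basis (Fin 7) R V) : Basis (Fin 7) R V :=
  B.map <| LinearEquiv.ofLinearMap
    (B.constr R ![B 0, B 2, B 1, B 3, B 5, -B 6, B 4 + B 6])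
    (B.constr R ![B 0, B 2, B 1, B 3, B 5 + B 6, B 4, -B 5])
    (B.ext fun i => by
      fin_cases i <;> simp [constr_basis, -constr_apply_fintype])
    (B.ext fun i => by
      fin_cases i <;> simp [constr_basis, -constr_apply_fintype])

theorem coframe37B_apply (B : Basis (Fin 7) R V) (i : Fin 7) :
    B.coframe37B i = ![B 0, B 2, B 1, B 3, B 5, -B 6, B 4 + B 6] i := by
  rw [coframe37B, map_apply, LinearEquiv.coe_ofLinearMap, constr_basis]

end Module.Basis

theorem ι_coframe37B_dualBasis (b : Basis (Fin 7) ℝ g) (i : Fin 7) :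
    ι ℝ (b.dualBasis.coframe37B i) =
      ![ef b 0, ef b 2, ef b 1, ef b 3, ef b 5, -ef b 6, ef b 4 + ef b 6] i := by
  rw [Basis.coframe37B_apply]
  fin_cases i <;> simp [ef]

theorem isCoframe37B_coframe37B_dualBasis {b : Basis (Fin 7) ℝ g}
    {d : ExteriorAlgebra ℝ (Dual ℝ g) →ₗ[ℝ] ExteriorAlgebra ℝ (Dual ℝ g)}
    (hd : IsCEDifferential b d) (hzero : ∀ i : Fin 7, i ≤ 3 → d (ef b i) = 0)
    (h5 : d (ef b 4) = ef b 0 * ef b 1) (h6 : d (ef b 5) = ef b 1 * ef b 2)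
    (h7 : d (ef b 6) = ef b 2 * ef b 3) :
    IsCoframe37B d b.dualBasis.coframe37B where
  map_ι_mul := hd.map_ι_mul
  d_ι_of_le_three i hi := by
    fin_cases i <;> simp only [ι_coframe37B_dualBasis] <;> first
      | exact hzero _ (by decide)
      | exact absurd hi (by decide)
  d_ι_four := by
    simp only [ι_coframe37B_dualBasis, Matrix.cons_val, h6]
    exact ι_mul_ι_anticomm _ _
  d_ι_five := by simp [ι_coframe37B_dualBasis, h7]
  d_ι_six := by simp [ι_coframe37B_dualBasis, h5, h7]

/-- The Lie algebra `37B` (`de⁵ = e^{12}`, `de⁶ = e^{23}`, `de⁷ = e^{34}`,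
all other `deⁱ = 0`) admits a purely coclosed G₂-structure: there is a basis `f¹,…,f⁷` of its
dual space with `d(∗φ) = 0` and `φ ∧ dφ = 0`. -/
theorem lie37B_purely_coclosed
    (b : Basis (Fin 7) ℝ g)
    (d : ExteriorAlgebra ℝ (Dual ℝ g) →ₗ[ℝ] ExteriorAlgebra ℝ (Dual ℝ g))
    (hd : IsCEDifferential b d)
    (hzero : ∀ i : Fin 7, i ≤ 3 → d (ef b i) = 0)
    (h5 : d (ef b 4) = ef b 0 * ef b 1)
    (h6 : d (ef b 5) = ef b 1 * ef b 2)
    (h7 : d (ef b 6) = ef b 2 * ef b 3) :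
    ∃ f : Basis (Fin 7) ℝ (Dual ℝ g),
      d (starPhiForm fun i => f i) = 0 ∧
      (phiG2Form fun i => f i) * d (phiG2Form fun i => f i) = 0 := by
  have hf := isCoframe37B_coframe37B_dualBasis hd hzero h5 h6 h7
  exact ⟨b.dualBasis.coframe37B, hf.d_starPhiForm, hf.phiG2Form_mul_d_phiG2Form⟩
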